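/- Let λ, μ, ν be real numbers and set |Rm|² = λ² + μ² + ν², |Rm°|² = (1/3)[(λ−μ)² + (λ−ν)² + (μ−ν)²], and P = λ²(μ−ν)² + μ²(λ−ν)² + ν²(λ−μ)². If δ ∈ (0,1) and μ² + ν² + μν ≥ (δ/2)(λ² + μ² + ν²) with |λ| ≥ |μ| ≥ |ν|, then P ≥ (δ/(96(3−δ))) · |Rm|² · |Rm°|². -/
import Mathlib

/-- Hamilton's pinching estimate (Lemma on necklike points, Appendix C):
if `μ² + ν² + μν ≥ (δ/2)(λ² + μ² + ν²)` with `|λ| ≥ |μ| ≥ |ν|` and `δ ∈ (0,1)`, then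
`P ≥ (δ/(96(3−δ))) |Rm|² |Rm°|²`. -/
theorem stmt0 (lam mu nu δ : ℝ) (hδ : δ ∈ Set.Ioo (0:ℝ) 1)
    (h1 : |mu| ≤ |lam|) (h2 : |nu| ≤ |mu|)
    (h : δ / 2 * (lam ^ 2 + mu ^ 2 + nu ^ 2) ≤ mu ^ 2 + nu ^ 2 + mu * nu) :
    δ / (96 * (3 - δ)) * (lam ^ 2 + mu ^ 2 + nu ^ 2) *
        ((1 / 3) * ((lam - mu) ^ 2 + (lam - nu) ^ 2 + (mu - nu) ^ 2)) ≤
      lam ^ 2 * (mu - nu) ^ 2 + mu ^ 2 * (lam - nu) ^ 2 + nu ^ 2 * (lam - mu) ^ 2 := by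
  obtain ⟨hd0, hd1⟩ := hδ
  have hl2 : mu ^ 2 ≤ lam ^ 2 := by
    nlinarith [sq_abs mu, sq_abs lam, abs_nonneg mu, abs_nonneg lam]
  have hn2 : nu ^ 2 ≤ mu ^ 2 := by
    nlinarith [sq_abs mu, sq_abs nu, abs_nonneg mu, abs_nonneg nu]
  have hR : (0:ℝ) ≤ lam ^ 2 + mu ^ 2 + nu ^ 2 := by positivity
  have hS : (0:ℝ) ≤ (1 / 3) * ((lam - mu) ^ 2 + (lam - nu) ^ 2 + (mu - nu) ^ 2) := by positivity
  have hc : δ / (96 * (3 - δ)) ≤ δ / 192 := by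
    rw [div_le_div_iff₀ (by linarith) (by norm_num)]
    nlinarith
  have hstep : δ / (96 * (3 - δ)) * (lam ^ 2 + mu ^ 2 + nu ^ 2) *
        ((1 / 3) * ((lam - mu) ^ 2 + (lam - nu) ^ 2 + (mu - nu) ^ 2)) ≤
      δ / 192 * (lam ^ 2 + mu ^ 2 + nu ^ 2) *
        ((1 / 3) * ((lam - mu) ^ 2 + (lam - nu) ^ 2 + (mu - nu) ^ 2)) := by
    exact mul_le_mul_of_nonneg_right (mul_le_mul_of_nonneg_right hc hR) hS
  refine hstep.trans ?_
  have hmu2 : δ / 6 * (lam ^ 2 + mu ^ 2 + nu ^ 2) ≤ mu ^ 2 := by nlinarith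
  have htri : (lam - mu) ^ 2 ≤ 2 * (lam - nu) ^ 2 + 2 * (mu - nu) ^ 2 := by
    nlinarith [sq_nonneg (lam + mu - 2 * nu)]
  rcases le_or_gt ((lam - nu) ^ 2) ((mu - nu) ^ 2) with hcase | hcase
  · -- S ≤ 6(μ−ν)², R ≤ 3λ², so RS ≤ 18 λ²(μ−ν)²
    have hS6 : (lam - mu) ^ 2 + (lam - nu) ^ 2 + (mu - nu) ^ 2 ≤ 6 * (mu - nu) ^ 2 := by
      linarith
    have hRl : lam ^ 2 + mu ^ 2 + nu ^ 2 ≤ 3 * lam ^ 2 := by linarith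
    have hprod : (lam ^ 2 + mu ^ 2 + nu ^ 2) *
        ((lam - mu) ^ 2 + (lam - nu) ^ 2 + (mu - nu) ^ 2) ≤
        (3 * lam ^ 2) * (6 * (mu - nu) ^ 2) :=
      mul_le_mul hRl hS6 (by positivity) (by positivity)
    have hdel : δ * ((lam ^ 2 + mu ^ 2 + nu ^ 2) *
        ((lam - mu) ^ 2 + (lam - nu) ^ 2 + (mu - nu) ^ 2)) ≤
        (lam ^ 2 + mu ^ 2 + nu ^ 2) *
        ((lam - mu) ^ 2 + (lam - nu) ^ 2 + (mu - nu) ^ 2) :=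
      mul_le_of_le_one_left (by positivity) hd1.le
    linarith [mul_nonneg (sq_nonneg nu) (sq_nonneg (lam - mu)),
      mul_nonneg (sq_nonneg mu) (sq_nonneg (lam - nu)),
      mul_nonneg (sq_nonneg lam) (sq_nonneg (mu - nu)), hdel, hprod]
  · -- S ≤ 6(λ−ν)², μ² ≥ δR/6
    have hS6 : (lam - mu) ^ 2 + (lam - nu) ^ 2 + (mu - nu) ^ 2 ≤ 6 * (lam - nu) ^ 2 := by
      linarith
    have hprod : δ * (lam ^ 2 + mu ^ 2 + nu ^ 2) *
        ((lam - mu) ^ 2 + (lam - nu) ^ 2 + (mu - nu) ^ 2) ≤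
        δ * (lam ^ 2 + mu ^ 2 + nu ^ 2) * (6 * (lam - nu) ^ 2) :=
      mul_le_mul_of_nonneg_left hS6 (by positivity)
    have hkey : δ / 6 * (lam ^ 2 + mu ^ 2 + nu ^ 2) * (lam - nu) ^ 2 ≤
        mu ^ 2 * (lam - nu) ^ 2 :=
      mul_le_mul_of_nonneg_right hmu2 (sq_nonneg _)
    linarith [mul_nonneg (sq_nonneg nu) (sq_nonneg (lam - mu)),
      mul_nonneg (sq_nonneg lam) (sq_nonneg (mu - nu)), hprod, hkey,
      mul_nonneg (mul_nonneg hd0.le hR) (sq_nonneg (lam - nu))]
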